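/- For every Householder matrix H = I - 2uuᵀ in ℝⁿˣⁿ with n ≥ 2, there exist unit vectors u₁, u₂, u₃ (with the corresponding Householder matrices H₁, H₂, H₃ all distinct from H) such that H·H₁ = H₂·H₃. -/
import Mathlib

open Matrix

private lemma vmv_mul {n : ℕ} (a b c d : Fin n → ℝ) :
    vecMulVec a b * vecMulVec c d = (∑ k, b k * c k) • vecMulVec a d := by
  ext i j
  simp only [Matrix.mul_apply, vecMulVec_apply, Matrix.smul_apply, smul_eq_mul,
    Finset.sum_mul]
  exact Finset.sum_congr rfl fun k _ => by ring

private lemma exists_orth (n : ℕ) (hn : 2 ≤ n) (u : Fin n → ℝ) :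
    ∃ v : Fin n → ℝ, (∑ i, v i * v i = 1) ∧ (∑ i, u i * v i = 0) := by
  -- the linear functional x ↦ ∑ u i * x i has nontrivial kernel
  set f : (Fin n → ℝ) →ₗ[ℝ] ℝ :=
    { toFun := fun x => ∑ i, u i * x i
      map_add' := fun x y => by simp [mul_add, Finset.sum_add_distrib]
      map_smul' := fun c x => by
        simp [Finset.mul_sum, smul_eq_mul]; exact Finset.sum_congr rfl fun k _ => by ring }
  have hne : ¬ Function.Injective f := by
    intro h
    have := LinearMap.finrank_le_finrank_of_injective h
    simp [Module.finrank_fintype_fun_eq_card] at this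
    omega
  rw [← LinearMap.ker_eq_bot] at hne
  obtain ⟨w, hw, hw0⟩ := Submodule.exists_mem_ne_zero_of_ne_bot hne
  have hwf : ∑ i, u i * w i = 0 := hw
  have hpos : 0 < ∑ i, w i * w i := by
    have : ∃ i, w i ≠ 0 := by
      by_contra h; push_neg at h; exact hw0 (funext h)
    obtain ⟨i, hi⟩ := this
    exact Finset.sum_pos' (fun j _ => mul_self_nonneg _)
      ⟨i, Finset.mem_univ i, mul_self_pos.mpr hi⟩
  set s := Real.sqrt (∑ i, w i * w i) with hs
  have hspos : 0 < s := Real.sqrt_pos.mpr hpos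
  refine ⟨fun i => w i / s, ?_, ?_⟩
  · have : ∑ i, w i / s * (w i / s) = (∑ i, w i * w i) / (s * s) := by
      rw [Finset.sum_div]; exact Finset.sum_congr rfl fun k _ => by ring
    rw [this, hs, Real.mul_self_sqrt hpos.le, div_self hpos.ne']
  · have : ∑ i, u i * (w i / s) = (∑ i, u i * w i) / s := by
      rw [Finset.sum_div]; exact Finset.sum_congr rfl fun k _ => by ring
    rw [this, hwf, zero_div]

private lemma vmv_ne {n : ℕ} (a b c : Fin n → ℝ) (ha : ∑ i, a i * a i = 1)
    (hac : ∑ j, a j * c j ≠ 0) (hbc : ∑ j, b j * c j = 0) :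
    vecMulVec a a ≠ vecMulVec b b := by
  intro h
  have hz : ∀ i, a i * ∑ j, a j * c j = 0 := by
    intro i
    have oneq : ∀ j, a i * a j = b i * b j := fun j => by
      have := congrFun (congrFun h i) j
      simpa [vecMulVec_apply] using this
    calc a i * ∑ j, a j * c j = ∑ j, (a i * a j) * c j := by
          rw [Finset.mul_sum]; exact Finset.sum_congr rfl fun j _ => by ring
      _ = ∑ j, (b i * b j) * c j := Finset.sum_congr rfl fun j _ => by rw [oneq]
      _ = b i * ∑ j, b j * c j := by
          rw [Finset.mul_sum]; exact Finset.sum_congr rfl fun j _ => by ring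
      _ = 0 := by rw [hbc, mul_zero]
  have ha0 : ∀ i, a i = 0 := fun i =>
    (mul_eq_zero.mp (hz i)).resolve_right hac
  rw [Finset.sum_eq_zero (fun i _ => by rw [ha0 i, mul_zero])] at ha
  exact one_ne_zero ha.symm

private lemma expand_prod {n : ℕ} (A B : Matrix (Fin n) (Fin n) ℝ) :
    (1 - (2:ℝ) • A) * (1 - (2:ℝ) • B)
      = 1 - (2:ℝ) • A - (2:ℝ) • B + (4:ℝ) • (A * B) := by
  simp only [sub_mul, mul_sub, one_mul, mul_one, smul_mul_assoc, mul_smul_comm, smul_smul]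
  module

/-- For every Householder matrix `H = I - 2uuᵀ` in `ℝⁿˣⁿ` with `n ≥ 2`, there exist unit
vectors `u₁, u₂, u₃` whose Householder matrices `H₁, H₂, H₃` are all distinct from `H`
and satisfy `H * H₁ = H₂ * H₃`. -/
theorem householder_product_nonunique (n : ℕ) (hn : 2 ≤ n) (u : Fin n → ℝ)
    (hu : ∑ i, u i * u i = 1) :
    ∃ u₁ u₂ u₃ : Fin n → ℝ,
      (∑ i, u₁ i * u₁ i = 1) ∧ (∑ i, u₂ i * u₂ i = 1) ∧ (∑ i, u₃ i * u₃ i = 1) ∧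
      (let H : Matrix (Fin n) (Fin n) ℝ := 1 - (2 : ℝ) • vecMulVec u u
       let H₁ : Matrix (Fin n) (Fin n) ℝ := 1 - (2 : ℝ) • vecMulVec u₁ u₁
       let H₂ : Matrix (Fin n) (Fin n) ℝ := 1 - (2 : ℝ) • vecMulVec u₂ u₂
       let H₃ : Matrix (Fin n) (Fin n) ℝ := 1 - (2 : ℝ) • vecMulVec u₃ u₃
       H₁ ≠ H ∧ H₂ ≠ H ∧ H₃ ≠ H ∧ H * H₁ = H₂ * H₃) := by
  obtain ⟨v, hv, huv⟩ := exists_orth n hn u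
  set r := Real.sqrt 2 with hrdef
  have hr2 : r * r = 2 := Real.mul_self_sqrt (by norm_num)
  have hr0 : r ≠ 0 := by
    intro h; rw [h] at hr2; norm_num at hr2
  refine ⟨v, fun i => (u i + v i) / r, fun i => (u i - v i) / r, hv, ?_, ?_, ?_, ?_, ?_, ?_⟩
  · -- norm of u₂
    have e : ∀ i, (u i + v i) / r * ((u i + v i) / r)
        = (u i * u i + 2 * (u i * v i) + v i * v i) / 2 := by
      intro i
      rw [div_mul_div_comm, hr2]; ring_nf
    simp_rw [e]
    rw [← Finset.sum_div, Finset.sum_add_distrib, Finset.sum_add_distrib, hu, hv,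
      ← Finset.mul_sum, huv]
    norm_num
  · -- norm of u₃
    have e : ∀ i, (u i - v i) / r * ((u i - v i) / r)
        = (u i * u i + v i * v i - 2 * (u i * v i)) / 2 := by
      intro i
      rw [div_mul_div_comm, hr2]; ring_nf
    simp_rw [e]
    rw [← Finset.sum_div, Finset.sum_sub_distrib, Finset.sum_add_distrib, hu, hv,
      ← Finset.mul_sum, huv]
    norm_num
  · -- H₁ ≠ H
    intro h
    rw [sub_right_inj] at h
    exact vmv_ne v u v hv (hv ▸ one_ne_zero) huv
      (smul_right_injective _ (two_ne_zero) h)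
  · -- H₂ ≠ H
    intro h
    rw [sub_right_inj] at h
    refine vmv_ne _ u v ?_ ?_ huv (smul_right_injective _ (two_ne_zero) h)
    · have e : ∀ i, (u i + v i) / r * ((u i + v i) / r)
          = (u i * u i + 2 * (u i * v i) + v i * v i) / 2 := by
        intro i; rw [div_mul_div_comm, hr2]; ring_nf
      simp_rw [e]
      rw [← Finset.sum_div, Finset.sum_add_distrib, Finset.sum_add_distrib, hu, hv,
        ← Finset.mul_sum, huv]
      norm_num
    · have e : ∀ j, (u j + v j) / r * v j = (u j * v j + v j * v j) / r := by
        intro j; field_simp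
      simp_rw [e]
      rw [← Finset.sum_div, Finset.sum_add_distrib, huv, hv]
      simp [hr0]
  · -- H₃ ≠ H
    intro h
    rw [sub_right_inj] at h
    refine vmv_ne _ u v ?_ ?_ huv (smul_right_injective _ (two_ne_zero) h)
    · have e : ∀ i, (u i - v i) / r * ((u i - v i) / r)
          = (u i * u i + v i * v i - 2 * (u i * v i)) / 2 := by
        intro i; rw [div_mul_div_comm, hr2]; ring_nf
      simp_rw [e]
      rw [← Finset.sum_div, Finset.sum_sub_distrib, Finset.sum_add_distrib, hu, hv,
        ← Finset.mul_sum, huv]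
      norm_num
    · have e : ∀ j, (u j - v j) / r * v j = (u j * v j - v j * v j) / r := by
        intro j; field_simp
      simp_rw [e]
      rw [← Finset.sum_div, Finset.sum_sub_distrib, huv, hv]
      simp [hr0]
  · -- the product identity
    have h23 : ∑ k, (u k + v k) / r * ((u k - v k) / r) = 0 := by
      have e : ∀ k, (u k + v k) / r * ((u k - v k) / r)
          = (u k * u k - v k * v k) / 2 := by
        intro k; rw [div_mul_div_comm, hr2]; ring_nf
      simp_rw [e]
      rw [← Finset.sum_div, Finset.sum_sub_distrib, hu, hv]
      norm_num
    have hsum : vecMulVec u u + vecMulVec v v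
        = vecMulVec (fun i => (u i + v i) / r) (fun i => (u i + v i) / r)
          + vecMulVec (fun i => (u i - v i) / r) (fun i => (u i - v i) / r) := by
      ext i j
      simp only [Matrix.add_apply, vecMulVec_apply]
      field_simp
      linear_combination (u i * u j + v i * v j) * hr2
    rw [expand_prod, expand_prod, vmv_mul, vmv_mul, huv, h23, zero_smul, zero_smul,
      smul_zero, add_zero, sub_sub, sub_sub, ← smul_add, ← smul_add,
      hsum, add_zero]
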